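/- Let x < a, b ≤ 0, let f(s) = (a−x)·s^{−3/2}·φ((a + bs − x)/√s) for s > 0, and define f_{T₂}(t) = ∫_0^∞ f(s)·e^{−b²(s+t)/2}·√s/(π√t(s+t)) ds for t > 0. Then lim_{t→0⁺} √t · f_{T₂}(t) = (1/π)·∫_0^∞ e^{−b²s/2}·s^{−1/2}·f(s) ds, a finite positive constant; in particular f_{T₂}(t) ∼ const/√t as t → 0⁺. -/

import Mathlib

/-
Completing the square, `e^{-b²s/2} s^{-1/2} f(s)` equals a constant times
`e^{-b²s} s^{-2} e^{-(a-x)²/(2s)}`, which is integrable on `(0, ∞)`: near `0` the Gaussian factor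
kills `s^{-2}`, near `∞` the factor `s^{-2}` does. After cancelling `√t`, the integrand of
`√t · f_{T₂}(t)` increases pointwise as `t ↓ 0` to `π⁻¹ e^{-b²s/2} s^{-1/2} f(s)`, so dominated
convergence gives the limit.
-/

open MeasureTheory

/-- The standard normal density `φ`. -/
noncomputable def stdPhi (z : ℝ) : ℝ := Real.exp (-z ^ 2 / 2) / Real.sqrt (2 * Real.pi)

/-- The (possibly defective) first-passage-time density of Brownian motion started at `x`
through the line `a + b s`. -/
noncomputable def fpt (a x b s : ℝ) : ℝ :=
  (a - x) * s ^ (-(3:ℝ) / 2) * stdPhi ((a + b * s - x) / Real.sqrt s)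

open Real Set Filter Topology

section FirstPassage

variable {a x b s : ℝ}

lemma exp_neg_le_two_div_sq {u : ℝ} (hu : 0 < u) : exp (-u) ≤ 2 / u ^ 2 := by
  have h := pow_div_factorial_le_exp u hu.le 2
  rw [exp_neg, inv_le_comm₀ (exp_pos u) (by positivity), inv_div]
  simpa using h

lemma integrableOn_rpow_neg_two_mul_exp_neg_div {c : ℝ} (hc : 0 < c) :
    IntegrableOn (fun s : ℝ => s ^ (-2 : ℝ) * exp (-(c / s))) (Ioi 0) := by
  have hmeas : AEStronglyMeasurable (fun s : ℝ => s ^ (-2 : ℝ) * exp (-(c / s))) :=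
    (by fun_prop : Measurable fun s : ℝ => s ^ (-2 : ℝ) * exp (-(c / s))).aestronglyMeasurable
  rw [← Ioc_union_Ioi_eq_Ioi zero_le_one]
  refine IntegrableOn.union ?_ ?_
  · refine Measure.integrableOn_of_bounded (M := 2 / c ^ 2) (by simp) hmeas ?_
    rw [ae_restrict_iff' measurableSet_Ioc]
    filter_upwards with s hs
    have hs : 0 < s := hs.1
    rw [norm_of_nonneg (by positivity)]
    calc s ^ (-2 : ℝ) * exp (-(c / s)) ≤ s ^ (-2 : ℝ) * (2 / (c / s) ^ 2) := by
          gcongr; exact exp_neg_le_two_div_sq (by positivity)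
      _ = 2 / c ^ 2 := by
          rw [rpow_neg hs.le, rpow_two]; field_simp
  · refine (integrableOn_Ioi_rpow_of_lt (by norm_num : (-2 : ℝ) < -1) one_pos).mono'
      hmeas.restrict ?_
    rw [ae_restrict_iff' measurableSet_Ioi]
    filter_upwards with s hs
    have hs0 : 0 < s := one_pos.trans hs
    rw [norm_of_nonneg (by positivity)]
    exact mul_le_of_le_one_right (by positivity) (exp_le_one_iff.mpr (by
      have : 0 < c / s := by positivity
      linarith))

lemma stdPhi_pos (z : ℝ) : 0 < stdPhi z := by
  unfold stdPhi; positivity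

lemma fpt_pos (b : ℝ) (hx : x < a) (hs : 0 < s) : 0 < fpt a x b s := by
  unfold fpt
  have := stdPhi_pos ((a + b * s - x) / √s)
  have : 0 < a - x := sub_pos.mpr hx
  positivity

lemma exp_mul_rpow_mul_fpt_eq (a x b : ℝ) (hs : 0 < s) :
    exp (-b ^ 2 * s / 2) * s ^ (-(1 : ℝ) / 2) * fpt a x b s =
      (a - x) / √(2 * π) * exp (-(b * (a - x))) * exp (-(b ^ 2 * s)) *
        (s ^ (-2 : ℝ) * exp (-((a - x) ^ 2 / 2 / s))) := by
  have hpow : s ^ (-(1 : ℝ) / 2) * s ^ (-(3 : ℝ) / 2) = s ^ (-2 : ℝ) := by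
    rw [← rpow_add hs]; norm_num
  have hexp : exp (-b ^ 2 * s / 2) * exp (-((a + b * s - x) / √s) ^ 2 / 2) =
      exp (-(b * (a - x))) * exp (-(b ^ 2 * s)) * exp (-((a - x) ^ 2 / 2 / s)) := by
    simp only [← exp_add, div_pow, sq_sqrt hs.le]
    congr 1
    field_simp
    ring
  unfold fpt stdPhi
  linear_combination (a - x) / √(2 * π) *
    (exp (-b ^ 2 * s / 2) * exp (-((a + b * s - x) / √s) ^ 2 / 2) * hpow +
      s ^ (-2 : ℝ) * hexp)

lemma integrableOn_exp_mul_rpow_mul_fpt (b : ℝ) (hx : x < a) :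
    IntegrableOn (fun s : ℝ => exp (-b ^ 2 * s / 2) * s ^ (-(1 : ℝ) / 2) * fpt a x b s)
      (Ioi 0) := by
  have hc : 0 < (a - x) ^ 2 / 2 := by have := sub_pos.mpr hx; positivity
  refine ((integrableOn_rpow_neg_two_mul_exp_neg_div hc).const_mul
    ((a - x) / √(2 * π) * exp (-(b * (a - x))))).mono' ?_ ?_
  · exact (by unfold fpt stdPhi; fun_prop :
      Measurable fun s : ℝ => exp (-b ^ 2 * s / 2) * s ^ (-(1 : ℝ) / 2) * fpt a x b s)
      |>.aestronglyMeasurable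
  · rw [ae_restrict_iff' measurableSet_Ioi]
    filter_upwards with s hs
    have hs : 0 < s := hs
    have hpos := fpt_pos b hx hs
    have hax : 0 < a - x := sub_pos.mpr hx
    rw [norm_of_nonneg (by positivity), exp_mul_rpow_mul_fpt_eq a x b hs]
    refine mul_le_mul_of_nonneg_right (mul_le_of_le_one_right (by positivity) ?_) (by positivity)
    exact exp_le_one_iff.mpr (by nlinarith [sq_nonneg b, hs.le])

lemma setIntegral_exp_mul_rpow_mul_fpt_pos (b : ℝ) (hx : x < a) :
    0 < ∫ s in Ioi (0 : ℝ), exp (-b ^ 2 * s / 2) * s ^ (-(1 : ℝ) / 2) * fpt a x b s := by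
  have hpos : ∀ s ∈ Ioi (0 : ℝ),
      0 < exp (-b ^ 2 * s / 2) * s ^ (-(1 : ℝ) / 2) * fpt a x b s := fun s hs => by
    have := fpt_pos b hx hs
    have : (0 : ℝ) < s := hs
    positivity
  have hsupp : Ioi 0 ⊆
      Function.support fun s => exp (-b ^ 2 * s / 2) * s ^ (-(1 : ℝ) / 2) * fpt a x b s :=
    fun s hs => (hpos s hs).ne'
  rw [setIntegral_pos_iff_support_of_nonneg_ae
      ((ae_restrict_iff' measurableSet_Ioi).mpr (.of_forall fun s hs => (hpos s hs).le))
      (integrableOn_exp_mul_rpow_mul_fpt b hx), inter_eq_right.mpr hsupp]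
  simp

lemma fpt_mul_exp_div_le (hx : x < a) (hs : 0 < s) {t : ℝ} (ht : 0 ≤ t) :
    fpt a x b s * exp (-b ^ 2 * (s + t) / 2) * √s / (π * (s + t)) ≤
      fpt a x b s * exp (-b ^ 2 * (s + 0) / 2) * √s / (π * (s + 0)) := by
  have := fpt_pos b hx hs
  gcongr ?_ * exp ?_ * _ / (_ * ?_)
  · nlinarith [sq_nonneg b]
  · linarith

lemma fpt_mul_exp_div_zero_eq (hs : 0 < s) :
    fpt a x b s * exp (-b ^ 2 * (s + 0) / 2) * √s / (π * (s + 0)) =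
      1 / π * (exp (-b ^ 2 * s / 2) * s ^ (-(1 : ℝ) / 2) * fpt a x b s) := by
  have hpow : s ^ (-(1 : ℝ) / 2) = √s / s := by
    rw [sqrt_eq_rpow, ← rpow_sub_one hs.ne']; norm_num
  rw [add_zero, hpow]
  field_simp

lemma tendsto_setIntegral_fpt_mul_exp_div (hx : x < a) :
    Tendsto (fun t => ∫ s in Ioi (0 : ℝ), fpt a x b s * exp (-b ^ 2 * (s + t) / 2) * √s /
        (π * (s + t))) (𝓝[>] 0)
      (𝓝 (1 / π * ∫ s in Ioi (0 : ℝ),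
        exp (-b ^ 2 * s / 2) * s ^ (-(1 : ℝ) / 2) * fpt a x b s)) := by
  rw [← integral_const_mul]
  refine tendsto_integral_filter_of_dominated_convergence
    (fun s => 1 / π * (exp (-b ^ 2 * s / 2) * s ^ (-(1 : ℝ) / 2) * fpt a x b s))
    (.of_forall fun t => ?_) ?_ ((integrableOn_exp_mul_rpow_mul_fpt b hx).const_mul _) ?_
  · exact (by unfold fpt stdPhi; fun_prop : Measurable fun s =>
      fpt a x b s * exp (-b ^ 2 * (s + t) / 2) * √s / (π * (s + t))).aestronglyMeasurable
  · filter_upwards [self_mem_nhdsWithin] with t (ht : 0 < t)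
    rw [ae_restrict_iff' measurableSet_Ioi]
    filter_upwards with s (hs : 0 < s)
    have := fpt_pos b hx hs
    rw [norm_of_nonneg (by positivity), ← fpt_mul_exp_div_zero_eq hs]
    exact fpt_mul_exp_div_le hx hs ht.le
  · rw [ae_restrict_iff' measurableSet_Ioi]
    filter_upwards with s (hs : 0 < s)
    rw [← fpt_mul_exp_div_zero_eq hs]
    refine (ContinuousAt.tendsto ?_).mono_left nhdsWithin_le_nhds
    exact ContinuousAt.div (by fun_prop) (by fun_prop) (by rw [add_zero]; positivity)

end FirstPassage

theorem stmt_15_general (a x b : ℝ) (hx : x < a) :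
    Filter.Tendsto
      (fun t : ℝ => Real.sqrt t *
        ∫ s in Set.Ioi (0:ℝ), fpt a x b s * Real.exp (-b ^ 2 * (s + t) / 2) *
          Real.sqrt s / (Real.pi * Real.sqrt t * (s + t)))
      (nhdsWithin 0 (Set.Ioi 0))
      (nhds (1 / Real.pi *
        ∫ s in Set.Ioi (0:ℝ),
          Real.exp (-b ^ 2 * s / 2) * s ^ (-(1:ℝ) / 2) * fpt a x b s)) ∧
    IntegrableOn
      (fun s : ℝ => Real.exp (-b ^ 2 * s / 2) * s ^ (-(1:ℝ) / 2) * fpt a x b s)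
      (Set.Ioi 0) ∧
    0 < 1 / Real.pi *
      ∫ s in Set.Ioi (0:ℝ),
        Real.exp (-b ^ 2 * s / 2) * s ^ (-(1:ℝ) / 2) * fpt a x b s := by
  have hpos := setIntegral_exp_mul_rpow_mul_fpt_pos b hx
  refine ⟨?_, integrableOn_exp_mul_rpow_mul_fpt b hx, by positivity⟩
  refine (tendsto_setIntegral_fpt_mul_exp_div hx).congr' ?_
  filter_upwards [self_mem_nhdsWithin] with t (ht : 0 < t)
  rw [← integral_const_mul]
  refine setIntegral_congr_fun measurableSet_Ioi fun s (hs : 0 < s) => ?_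
  field_simp

/-- for `x < a` and `b ≤ 0`, the density
`f_{T₂}(t) = ∫_0^∞ f(s) e^{-b²(s+t)/2} √s/(π √t (s+t)) ds` satisfies
`√t · f_{T₂}(t) → (1/π) ∫_0^∞ e^{-b²s/2} s^{-1/2} f(s) ds` as `t → 0⁺`, a finite positive
constant; in particular `f_{T₂}(t) ~ const/√t` as `t → 0⁺`. -/
theorem stmt_15 (a x b : ℝ) (hx : x < a) (hb : b ≤ 0) :
    Filter.Tendsto
      (fun t : ℝ => Real.sqrt t *
        ∫ s in Set.Ioi (0:ℝ), fpt a x b s * Real.exp (-b ^ 2 * (s + t) / 2) *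
          Real.sqrt s / (Real.pi * Real.sqrt t * (s + t)))
      (nhdsWithin 0 (Set.Ioi 0))
      (nhds (1 / Real.pi *
        ∫ s in Set.Ioi (0:ℝ),
          Real.exp (-b ^ 2 * s / 2) * s ^ (-(1:ℝ) / 2) * fpt a x b s)) ∧
    IntegrableOn
      (fun s : ℝ => Real.exp (-b ^ 2 * s / 2) * s ^ (-(1:ℝ) / 2) * fpt a x b s)
      (Set.Ioi 0) ∧
    0 < 1 / Real.pi *
      ∫ s in Set.Ioi (0:ℝ),
        Real.exp (-b ^ 2 * s / 2) * s ^ (-(1:ℝ) / 2) * fpt a x b s :=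
  stmt_15_general a x b hx
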